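/- arXiv:1402.1435 — 3 statements merged into one kernel-verified Lean document; each statement's English description precedes it below -/
import Mathlib

section
/- The dimensionless van der Waals pressure p(ρ,T) = 8Tρ/(3-ρ) - 3ρ² satisfies: for every temperature T ≥ 1 the map ρ ↦ p(ρ,T) is strictly increasing on (0,3). -/
/-- For the dimensionless van der Waals pressure `p(ρ,T) = 8Tρ/(3-ρ) - 3ρ²`,
for every temperature `T ≥ 1` the map `ρ ↦ p(ρ,T)` is strictly increasing on `(0,3)`. -/
theorem vdW_pressure_strictMono_of_supercritical :
    ∀ T : ℝ, 1 ≤ T →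
      StrictMonoOn (fun ρ : ℝ => 8 * T * ρ / (3 - ρ) - 3 * ρ ^ 2) (Set.Ioo 0 3) := by
  intro T hT a ha b hb hab
  obtain ⟨ha0, ha3⟩ := ha
  obtain ⟨hb0, hb3⟩ := hb
  have h3a : (0:ℝ) < 3 - a := by linarith
  have h3b : (0:ℝ) < 3 - b := by linarith
  simp only
  rw [sub_lt_sub_iff, div_add' _ _ _ h3a.ne', div_add' _ _ _ h3b.ne', div_lt_div_iff₀ h3a h3b]
  have hba : 0 < b - a := by linarith
  have key : (a + b) * (3 - a) * (3 - b) < 8 * T := by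
    nlinarith [sq_nonneg (a + b - 2), sq_nonneg (a - b), sq_nonneg (a + b - 2 + (a - b)),
      sq_nonneg (a + b - 2 - (a - b)), mul_pos h3a h3b, mul_pos ha0 hb0,
      mul_pos (mul_pos h3a h3b) hba]
  nlinarith [mul_pos (mul_pos h3a h3b) hba, mul_pos hba (sub_pos.2 key)]
end

section
/- Along any C¹ solution (ρ(t),ρ₁(t),ρ₂(t)) of the ODE system ρ̇ = 0, ρ̇₁ = -(ρ-ρ₁)(ρ-ρ₂)[ρ₂(μ(ρ₂)-μ(ρ₁)) + p(ρ₁) - p(ρ₂)], ρ̇₂ = (ρ-ρ₁)(ρ-ρ₂)[ρ₁(μ(ρ₁)-μ(ρ₂)) - p(ρ₁) + p(ρ₂)], with ρ₁(t) < ρ(t) < ρ₂(t), the total free energy F(ρ,ρ₁,ρ₂) = α₁f(ρ₁) + α₂f(ρ₂) is nonincreasing in time: d/dt F ≤ 0. -/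
/-!
Write `F(r, r₁, r₂) = α₁ f(r₁) + α₂ f(r₂)` and let `A = f(r₂) - f(r₁) - μ(r₁)(r₂ - r₁)`,
`B = f(r₁) - f(r₂) - μ(r₂)(r₁ - r₂)` be the gaps of the tangent lines of `f` at `r₁` and `r₂`.
Then `∂F/∂r₁ = (r - r₂) A / (r₁ - r₂)²` and `∂F/∂r₂ = (r - r₁) B / (r₁ - r₂)²`, while
(using `p = rμ - f`) the system reads `ρ̇₁ = -K A`, `ρ̇₂ = K B` with `K = (ρ - ρ₁)(ρ - ρ₂) < 0`.
So it is a gradient flow `ρ̇ᵢ = -mᵢ ∂F/∂ρᵢ` with positive mobilities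
`m₁ = (ρ₁ - ρ₂)²(ρ - ρ₁)`, `m₂ = (ρ₁ - ρ₂)²(ρ₂ - ρ)`, and `dF/dt = -m₁ (∂₁F)² - m₂ (∂₂F)² ≤ 0`.
-/

/-- Right-hand side of the relaxation ODE for `ρ₁`. -/
def odeR1 (μ p : ℝ → ℝ) (r r₁ r₂ : ℝ) : ℝ :=
  -((r - r₁) * (r - r₂) * (r₂ * (μ r₂ - μ r₁) + p r₁ - p r₂))

/-- Right-hand side of the relaxation ODE for `ρ₂`. -/
def odeR2 (μ p : ℝ → ℝ) (r r₁ r₂ : ℝ) : ℝ :=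
  (r - r₁) * (r - r₂) * (r₁ * (μ r₁ - μ r₂) - p r₁ + p r₂)

namespace Relaxation

noncomputable def freeEnergy (f : ℝ → ℝ) (r r₁ r₂ : ℝ) : ℝ :=
  ((r - r₂) / (r₁ - r₂)) * f r₁ + (1 - (r - r₂) / (r₁ - r₂)) * f r₂

def tangentGap (f μ : ℝ → ℝ) (a b : ℝ) : ℝ :=
  f b - f a - μ a * (b - a)

variable {f μ p : ℝ → ℝ}

theorem odeR1_eq_tangentGap (hp : ∀ ρ, p ρ = ρ * μ ρ - f ρ) (r r₁ r₂ : ℝ) :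
    odeR1 μ p r r₁ r₂ = -((r - r₁) * (r - r₂) * tangentGap f μ r₁ r₂) := by
  simp only [odeR1, tangentGap, hp]
  ring

theorem odeR2_eq_tangentGap (hp : ∀ ρ, p ρ = ρ * μ ρ - f ρ) (r r₁ r₂ : ℝ) :
    odeR2 μ p r r₁ r₂ = (r - r₁) * (r - r₂) * tangentGap f μ r₂ r₁ := by
  simp only [odeR2, tangentGap, hp]
  ring

theorem hasDerivAt_freeEnergy_comp {ρ ρ₁ ρ₂ : ℝ → ℝ} {v v₁ v₂ t : ℝ}
    (hρ : HasDerivAt ρ v t) (hρ₁ : HasDerivAt ρ₁ v₁ t) (hρ₂ : HasDerivAt ρ₂ v₂ t)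
    (hf₁ : HasDerivAt f (μ (ρ₁ t)) (ρ₁ t)) (hf₂ : HasDerivAt f (μ (ρ₂ t)) (ρ₂ t))
    (hne : ρ₁ t ≠ ρ₂ t) :
    HasDerivAt (fun s => freeEnergy f (ρ s) (ρ₁ s) (ρ₂ s))
      ((f (ρ₁ t) - f (ρ₂ t)) / (ρ₁ t - ρ₂ t) * v
        + (ρ t - ρ₂ t) / (ρ₁ t - ρ₂ t) ^ 2 * tangentGap f μ (ρ₁ t) (ρ₂ t) * v₁
        + (ρ t - ρ₁ t) / (ρ₁ t - ρ₂ t) ^ 2 * tangentGap f μ (ρ₂ t) (ρ₁ t) * v₂) t := by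
  have hd : ρ₁ t - ρ₂ t ≠ 0 := sub_ne_zero.mpr hne
  have hα : HasDerivAt (fun s => (ρ s - ρ₂ s) / (ρ₁ s - ρ₂ s))
      (((v - v₂) * (ρ₁ t - ρ₂ t) - (ρ t - ρ₂ t) * (v₁ - v₂)) / (ρ₁ t - ρ₂ t) ^ 2) t :=
    (hρ.sub hρ₂).div (hρ₁.sub hρ₂) hd
  refine ((hα.mul (hf₁.comp t hρ₁)).add ((hα.const_sub 1).mul (hf₂.comp t hρ₂))).congr_deriv ?_
  simp only [tangentGap, Function.comp_apply]
  field_simp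
  ring

theorem gradientFlow_dissipation_nonpos {r r₁ r₂ : ℝ} (h₁ : r₁ < r) (h₂ : r < r₂) (A B : ℝ) :
    (r - r₂) / (r₁ - r₂) ^ 2 * A * -((r - r₁) * (r - r₂) * A)
      + (r - r₁) / (r₁ - r₂) ^ 2 * B * ((r - r₁) * (r - r₂) * B) ≤ 0 := by
  have hm₁ : 0 ≤ (r - r₁) / (r₁ - r₂) ^ 2 := div_nonneg (by linarith) (sq_nonneg _)
  have hm₂ : 0 ≤ (r₂ - r) / (r₁ - r₂) ^ 2 := div_nonneg (by linarith) (sq_nonneg _)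
  calc _ = -((r - r₁) / (r₁ - r₂) ^ 2 * ((r - r₂) * A) ^ 2)
        - (r₂ - r) / (r₁ - r₂) ^ 2 * ((r - r₁) * B) ^ 2 := by ring
    _ ≤ 0 := by linarith [mul_nonneg hm₁ (sq_nonneg ((r - r₂) * A)),
        mul_nonneg hm₂ (sq_nonneg ((r - r₁) * B))]

end Relaxation

open Relaxation in
/-- Along any C¹ solution of the relaxation dynamical system with
`ρ₁(t) < ρ(t) < ρ₂(t)`, the total free energy
`F = α₁ f(ρ₁) + α₂ f(ρ₂)` is nonincreasing: `d/dt F ≤ 0`. -/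
theorem free_energy_dissipation (f μ p : ℝ → ℝ)
    (hf : ContDiff ℝ 1 f)
    (hμ : ∀ ρ : ℝ, μ ρ = deriv f ρ)
    (hp : ∀ ρ : ℝ, p ρ = ρ * μ ρ - f ρ)
    (ρ ρ₁ ρ₂ : ℝ → ℝ)
    (hord : ∀ t : ℝ, ρ₁ t < ρ t ∧ ρ t < ρ₂ t)
    (hρ : ∀ t : ℝ, HasDerivAt ρ 0 t)
    (hρ₁ : ∀ t : ℝ, HasDerivAt ρ₁ (odeR1 μ p (ρ t) (ρ₁ t) (ρ₂ t)) t)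
    (hρ₂ : ∀ t : ℝ, HasDerivAt ρ₂ (odeR2 μ p (ρ t) (ρ₁ t) (ρ₂ t)) t) :
    ∀ t : ℝ,
      deriv (fun s : ℝ =>
        ((ρ s - ρ₂ s) / (ρ₁ s - ρ₂ s)) * f (ρ₁ s)
          + (1 - (ρ s - ρ₂ s) / (ρ₁ s - ρ₂ s)) * f (ρ₂ s)) t ≤ 0 := by
  intro t
  obtain ⟨h₁, h₂⟩ := hord t
  have hf' : ∀ x, HasDerivAt f (μ x) x := fun x =>
    hμ x ▸ (hf.differentiable one_ne_zero x).hasDerivAt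
  have hF := hasDerivAt_freeEnergy_comp (hρ t) (hρ₁ t) (hρ₂ t) (hf' _) (hf' _)
    (by linarith : ρ₁ t ≠ ρ₂ t)
  change deriv (fun s => freeEnergy f (ρ s) (ρ₁ s) (ρ₂ s)) t ≤ 0
  rw [hF.deriv, odeR1_eq_tangentGap hp, odeR2_eq_tangentGap hp, mul_zero, zero_add]
  exact gradientFlow_dissipation_nonpos h₁ h₂ _ _
end

section
/- For the dimensionless van der Waals isotherm at T = 0.85, the function ρ ↦ ∂_ρ p(ρ, 0.85), with p(ρ,T) = 8Tρ/(3-ρ) - 3ρ², has exactly two zeros ρ⁻ < ρ⁺ in (0,3), with ρ⁻ ∈ (0.58, 0.59) and ρ⁺ ∈ (1.48, 1.49). -/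
/-!
A zero of `∂_ρ p(ρ, T) = 24T/(3-ρ)² - 6ρ` is a root of the cubic `ρ(3-ρ)² = 4T`. At `T = 0.85`
this cubic changes sign on `(0.58, 0.59)` and on `(1.48, 1.49)`, giving two roots `ρ⁻ < ρ⁺`
by the intermediate value theorem. Since the roots of the monic cubic sum to `6`, the third
root is `6 - ρ⁻ - ρ⁺ > 3`, so there is no other zero in `(0, 3)`.
-/

theorem eq_or_eq_or_eq_of_cubic_eq_zero {a b c u v x : ℝ} (huv : u ≠ v)
    (hu : u ^ 3 + a * u ^ 2 + b * u + c = 0) (hv : v ^ 3 + a * v ^ 2 + b * v + c = 0)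
    (hx : x ^ 3 + a * x ^ 2 + b * x + c = 0) :
    x = u ∨ x = v ∨ x = -a - u - v := by
  have hb : u ^ 2 + u * v + v ^ 2 + a * (u + v) + b = 0 := by
    have : (u - v) * (u ^ 2 + u * v + v ^ 2 + a * (u + v) + b) = 0 := by
      linear_combination hu - hv
    exact (mul_eq_zero.mp this).resolve_left (sub_ne_zero.mpr huv)
  have hfactor : (x - u) * ((x - v) * (x - (-a - u - v))) = 0 := by
    linear_combination hx - (x - u) * hb - hu
  rcases mul_eq_zero.mp hfactor with h | h
  · exact .inl (sub_eq_zero.mp h)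
  rcases mul_eq_zero.mp h with h | h
  · exact .inr (.inl (sub_eq_zero.mp h))
  · exact .inr (.inr (sub_eq_zero.mp h))

namespace VanDerWaals

noncomputable def pressure (T ρ : ℝ) : ℝ := 8 * T * ρ / (3 - ρ) - 3 * ρ ^ 2

variable {T ρ : ℝ}

theorem hasDerivAt_pressure (hρ : ρ ≠ 3) :
    HasDerivAt (pressure T) (24 * T / (3 - ρ) ^ 2 - 6 * ρ) ρ := by
  have hne : 3 - ρ ≠ 0 := sub_ne_zero.mpr hρ.symm
  have hquot := ((hasDerivAt_id' ρ).const_mul (8 * T)).div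
    ((hasDerivAt_id' ρ).const_sub 3) hne
  refine (hquot.sub ((hasDerivAt_pow 2 ρ).const_mul 3)).congr_deriv ?_
  field_simp
  ring

theorem deriv_pressure_eq_zero_iff (hρ : ρ ≠ 3) :
    deriv (pressure T) ρ = 0 ↔ ρ * (3 - ρ) ^ 2 = 4 * T := by
  have hne : 3 - ρ ≠ 0 := sub_ne_zero.mpr hρ.symm
  rw [(hasDerivAt_pressure hρ).deriv, sub_eq_zero, div_eq_iff (pow_ne_zero 2 hne)]
  constructor <;> intro h <;> linarith

theorem eq_or_eq_or_eq_of_spinodal {u v x : ℝ} (huv : u ≠ v) (hu : u * (3 - u) ^ 2 = 4 * T)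
    (hv : v * (3 - v) ^ 2 = 4 * T) (hx : x * (3 - x) ^ 2 = 4 * T) :
    x = u ∨ x = v ∨ x = 6 - u - v := by
  have := eq_or_eq_or_eq_of_cubic_eq_zero (a := -6) (b := 9) (c := -4 * T) (x := x) huv
    (by linear_combination hu) (by linear_combination hv) (by linear_combination hx)
  rwa [neg_neg] at this

end VanDerWaals

open VanDerWaals in
/-- At `T = 0.85`, the derivative `ρ ↦ ∂_ρ p(ρ, 0.85)` of the van der Waals
pressure has exactly two zeros `ρ⁻ < ρ⁺` in `(0,3)`, with
`ρ⁻ ∈ (0.58, 0.59)` and `ρ⁺ ∈ (1.48, 1.49)`. -/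
theorem vdW_spinodal_boundaries :
    ∃ ρm ρp : ℝ,
      ρm ∈ Set.Ioo (0.58 : ℝ) 0.59 ∧ ρp ∈ Set.Ioo (1.48 : ℝ) 1.49 ∧
      deriv (fun r : ℝ => 8 * 0.85 * r / (3 - r) - 3 * r ^ 2) ρm = 0 ∧
      deriv (fun r : ℝ => 8 * 0.85 * r / (3 - r) - 3 * r ^ 2) ρp = 0 ∧
      ∀ ρ ∈ Set.Ioo (0 : ℝ) 3,
        deriv (fun r : ℝ => 8 * 0.85 * r / (3 - r) - 3 * r ^ 2) ρ = 0 →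
          ρ = ρm ∨ ρ = ρp := by
  have hcont : Continuous fun r : ℝ => r * (3 - r) ^ 2 := by fun_prop
  obtain ⟨ρm, hρm, hm⟩ := intermediate_value_Ioo (by norm_num : (0.58 : ℝ) ≤ 0.59)
    hcont.continuousOn (by norm_num : 4 * (0.85 : ℝ) ∈ Set.Ioo _ _)
  obtain ⟨ρp, hρp, hp⟩ := intermediate_value_Ioo' (by norm_num : (1.48 : ℝ) ≤ 1.49)
    hcont.continuousOn (by norm_num : 4 * (0.85 : ℝ) ∈ Set.Ioo _ _)
  refine ⟨ρm, ρp, hρm, hρp, (deriv_pressure_eq_zero_iff (by linarith [hρm.2])).2 hm,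
    (deriv_pressure_eq_zero_iff (by linarith [hρp.2])).2 hp, fun ρ hρ hd => ?_⟩
  have hx := (deriv_pressure_eq_zero_iff hρ.2.ne).1 hd
  rcases eq_or_eq_or_eq_of_spinodal (by linarith [hρm.2, hρp.1]) hm hp hx with h | h | h
  · exact .inl h
  · exact .inr h
  · linarith [hρ.2, hρm.2, hρp.2]
end
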